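/- arXiv:2409.17449 — 2 statements merged into one kernel-verified Lean document; each statement's English description precedes it below -/
import Mathlib

section
/- The q-Chu–Vandermonde identity: for a nonnegative integer n and parameters b, c, the terminating basic hypergeometric series ₂φ₁(q^{-n}, b; c; q, cq^n/b) = (c/b; q)_n / (c; q)_n, where ₂φ₁(a₁,a₂;b₁;q,z) = ∑_{m=0}^{∞} (a₁;q)_m (a₂;q)_m / ((q;q)_m (b₁;q)_m) · z^m. -/
open Finset

noncomputable section

abbrev F := RatFunc ℚ

noncomputable def q : F := RatFunc.X

/-- Gaussian binomial coefficient `binom(n,m)_x`, equal to 0 when `m < 0` or `m > n`. -/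
noncomputable def gb (x : F) (n m : ℤ) : F :=
  if 0 ≤ m ∧ m ≤ n then
    (∏ j ∈ Finset.Icc (0:ℤ) (m-1), (1 - x ^ (n - j))) /
    (∏ j ∈ Finset.Icc (0:ℤ) (m-1), (1 - x ^ (j + 1)))
  else 0

/-- q-Pochhammer symbol `(x; y)_m`. -/
noncomputable def poch (x y : F) (m : ℤ) : F :=
  ∏ j ∈ Finset.Icc (0:ℤ) (m-1), (1 - x * y ^ j)

/-! The sums `S n = ∑ m ≤ n, t n m` of the summands of the left-hand side satisfy the
contiguous relation `(1 - c q^n) S (n+1) = (1 - c q^n / b) S n`, and the right-hand side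
satisfies the same recursion, so the identity follows by induction on `n`. The relation is a
telescoping sum (a WZ pair): the difference of the `m`-th summands is `G (m+1) - G m` for the
certificate `G m = (1 - b q^m) (c q^n / b) t n m`, and the boundary term `G (n+1)` vanishes
because `(q^{-n}; q)_{n+1} = 0`. -/

section QPochhammer

variable {K : Type*} [Field K]

def qPochhammer (a q : K) (m : ℕ) : K := ∏ j ∈ range m, (1 - a * q ^ j)

theorem qPochhammer_succ (a q : K) (m : ℕ) :
    qPochhammer a q (m + 1) = qPochhammer a q m * (1 - a * q ^ m) :=
  prod_range_succ _ _

theorem qPochhammer_succ' (a q : K) (m : ℕ) :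
    qPochhammer a q (m + 1) = (1 - a) * qPochhammer (a * q) q m := by
  simp only [qPochhammer, prod_range_succ', pow_succ, pow_zero, mul_one, mul_assoc, mul_comm]

theorem qPochhammer_ne_zero_iff {a q : K} {m : ℕ} :
    qPochhammer a q m ≠ 0 ↔ ∀ j < m, 1 - a * q ^ j ≠ 0 := by
  simp [qPochhammer, prod_ne_zero_iff]

theorem qPochhammer_inv_pow_succ {q : K} (hq : q ≠ 0) (n : ℕ) :
    qPochhammer (q ^ n)⁻¹ q (n + 1) = 0 := by
  rw [qPochhammer_succ, inv_mul_cancel₀ (pow_ne_zero n hq), sub_self, mul_zero]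

end QPochhammer

section ChuVandermonde

variable {K : Type*} [Field K] (q b c : K)

def chuVandermondeTerm (n m : ℕ) : K :=
  qPochhammer (q ^ n)⁻¹ q m * qPochhammer b q m / (qPochhammer q q m * qPochhammer c q m) *
    (c * q ^ n / b) ^ m

theorem chuVandermondeTerm_zero_right (n : ℕ) : chuVandermondeTerm q b c n 0 = 1 := by
  simp [chuVandermondeTerm, qPochhammer]

theorem chuVandermondeTerm_succ_right (n m : ℕ) :
    chuVandermondeTerm q b c n (m + 1) = chuVandermondeTerm q b c n m *
      ((1 - (q ^ n)⁻¹ * q ^ m) * (1 - b * q ^ m) * (c * q ^ n / b) /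
        ((1 - q * q ^ m) * (1 - c * q ^ m))) := by
  simp only [chuVandermondeTerm, qPochhammer_succ, div_eq_mul_inv, mul_inv]
  ring

theorem chuVandermondeTerm_succ_succ {q : K} (hq : q ≠ 0) (b c : K) (n m : ℕ) :
    chuVandermondeTerm q b c (n + 1) (m + 1) = chuVandermondeTerm q b c n m *
      ((1 - (q ^ (n + 1))⁻¹) * (1 - b * q ^ m) * (c * q ^ n / b) * q ^ (m + 1) /
        ((1 - q * q ^ m) * (1 - c * q ^ m))) := by
  have hshift : (q ^ (n + 1))⁻¹ * q = (q ^ n)⁻¹ := by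
    rw [pow_succ, mul_inv, mul_assoc, inv_mul_cancel₀ hq, mul_one]
  simp only [chuVandermondeTerm, qPochhammer_succ' (q ^ (n + 1))⁻¹, hshift, qPochhammer_succ]
  rw [show c * q ^ (n + 1) / b = c * q ^ n / b * q by ring, mul_pow, pow_succ (c * q ^ n / b)]
  simp only [div_eq_mul_inv, mul_inv]
  ring

theorem chuVandermondeTerm_self_succ {q : K} (hq : q ≠ 0) (b c : K) (n : ℕ) :
    chuVandermondeTerm q b c n (n + 1) = 0 := by
  simp [chuVandermondeTerm, qPochhammer_inv_pow_succ hq]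

def chuVandermondeCert (n m : ℕ) : K :=
  (1 - b * q ^ m) * (c * q ^ n / b) * chuVandermondeTerm q b c n m

theorem chuVandermondeTerm_telescope {q b c : K} (hq : q ≠ 0) (hb : b ≠ 0) {n m : ℕ}
    (hqm : 1 - q * q ^ m ≠ 0) (hcm : 1 - c * q ^ m ≠ 0) :
    (1 - c * q ^ n) * chuVandermondeTerm q b c (n + 1) (m + 1) -
        (1 - c * q ^ n / b) * chuVandermondeTerm q b c n (m + 1) =
      chuVandermondeCert q b c n (m + 1) - chuVandermondeCert q b c n m := by
  have hqn : q ^ n ≠ 0 := pow_ne_zero n hq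
  rw [chuVandermondeCert, chuVandermondeCert, chuVandermondeTerm_succ_succ hq,
    chuVandermondeTerm_succ_right, pow_succ q m, pow_succ q n]
  generalize chuVandermondeTerm q b c n m = T at *
  generalize q ^ m = M at *
  generalize q ^ n = N at *
  field_simp
  ring

theorem chuVandermonde_contiguous {q b c : K} (hq : q ≠ 0) (hb : b ≠ 0) {n : ℕ}
    (hqq : ∀ m < n + 1, 1 - q * q ^ m ≠ 0) (hc : ∀ m < n + 1, 1 - c * q ^ m ≠ 0) :
    (1 - c * q ^ n) * ∑ m ∈ range (n + 2), chuVandermondeTerm q b c (n + 1) m =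
      (1 - c * q ^ n / b) * ∑ m ∈ range (n + 1), chuVandermondeTerm q b c n m := by
  have hlast : ∑ m ∈ range (n + 1), chuVandermondeTerm q b c n m =
      ∑ m ∈ range (n + 2), chuVandermondeTerm q b c n m := by
    rw [sum_range_succ _ (n + 1), chuVandermondeTerm_self_succ hq, add_zero]
  rw [hlast, ← sub_eq_zero, mul_sum, mul_sum, ← sum_sub_distrib, sum_range_succ',
    sum_congr rfl fun m hm => chuVandermondeTerm_telescope hq hb
      (hqq m (mem_range.mp hm)) (hc m (mem_range.mp hm)),
    sum_range_sub, chuVandermondeCert, chuVandermondeTerm_self_succ hq, chuVandermondeCert,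
    chuVandermondeTerm_zero_right, chuVandermondeTerm_zero_right]
  field_simp
  ring

theorem sum_chuVandermondeTerm {q b c : K} (hq : q ≠ 0) (hb : b ≠ 0) {n : ℕ}
    (hqq : qPochhammer q q n ≠ 0) (hc : qPochhammer c q n ≠ 0) :
    ∑ m ∈ range (n + 1), chuVandermondeTerm q b c n m =
      qPochhammer (c / b) q n / qPochhammer c q n := by
  induction n with
  | zero => simp [chuVandermondeTerm_zero_right, qPochhammer]
  | succ n ih =>
    have hrel := chuVandermonde_contiguous (b := b) hq hb (qPochhammer_ne_zero_iff.mp hqq)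
      (qPochhammer_ne_zero_iff.mp hc)
    rw [qPochhammer_succ] at hqq hc
    rw [ih (left_ne_zero_of_mul hqq) (left_ne_zero_of_mul hc)] at hrel
    obtain ⟨hcn, hcq⟩ := mul_ne_zero_iff.mp hc
    rw [qPochhammer_succ (c / b), qPochhammer_succ c]
    field_simp at hrel ⊢
    linear_combination hrel

end ChuVandermonde

theorem prod_Icc_zero_sub_one_eq_prod_range {M : Type*} [CommMonoid M] (f : ℤ → M) (k : ℕ) :
    ∏ j ∈ Icc (0 : ℤ) (k - 1), f j = ∏ j ∈ range k, f j := by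
  simp [Int.Icc_eq_finset_map, prod_map]

theorem sum_Icc_zero_eq_sum_range {M : Type*} [AddCommMonoid M] (f : ℤ → M) (k : ℕ) :
    ∑ j ∈ Icc (0 : ℤ) k, f j = ∑ j ∈ range (k + 1), f j := by
  simp [Int.Icc_eq_finset_map, sum_map]

theorem RatFunc.one_sub_X_mul_X_pow_ne_zero {K : Type*} [Field K] (j : ℕ) :
    (1 : RatFunc K) - RatFunc.X * RatFunc.X ^ j ≠ 0 := by
  have hpoly : (Polynomial.X ^ (j + 1) - Polynomial.C 1 : Polynomial K) ≠ 0 :=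
    Polynomial.X_pow_sub_C_ne_zero j.succ_pos 1
  intro h
  apply hpoly
  apply RatFunc.algebraMap_injective K
  simp only [map_sub, map_pow, RatFunc.algebraMap_X, map_one, map_zero]
  linear_combination -h

theorem poch_natCast (x y : F) (k : ℕ) : poch x y k = qPochhammer x y k := by
  simp [poch, qPochhammer, prod_Icc_zero_sub_one_eq_prod_range (fun j => 1 - x * y ^ j)]

theorem qPochhammer_q_q_ne_zero (n : ℕ) : qPochhammer q q n ≠ 0 :=
  (qPochhammer_ne_zero_iff (m := n)).mpr fun j _ => RatFunc.one_sub_X_mul_X_pow_ne_zero j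

/-- The q-Chu–Vandermonde identity. -/
theorem stmt5 (n : ℕ) (b c : F) (hb : b ≠ 0) (hc : poch c q (n:ℤ) ≠ 0) :
    ∑ m ∈ Finset.Icc (0:ℤ) (n:ℤ),
      poch (q^(-(n:ℤ))) q m * poch b q m / (poch q q m * poch c q m) *
        (c * q^(n:ℤ) / b)^m
    = poch (c/b) q (n:ℤ) / poch c q (n:ℤ) := by
  rw [poch_natCast] at hc
  rw [sum_Icc_zero_eq_sum_range]
  simp only [poch_natCast, zpow_natCast, zpow_neg]
  exact sum_chuVandermondeTerm RatFunc.X_ne_zero hb (qPochhammer_q_q_ne_zero n) hc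
end
end

section
/- For even n ≥ 2 and 1 ≤ k ≤ n/2, the rational function ((q^{(n-1)k}-1)/(q-1)) · ∏_{j=k+1}^{n/2} (q^{2j}-1)/(q^{2j-2k}-1) is a polynomial in q with nonnegative integer coefficients. -/
/-! With `x = q ^ 2` the product is the Gaussian binomial coefficient `[n/2 choose k]_x`, and the
first factor is the geometric sum `1 + q + ⋯ + q ^ ((n - 1) k - 1)`. Defining the Gaussian binomial
by the `q`-Pascal rule makes it a polynomial with coefficients in `ℕ`; the same rule is satisfied by
the quotient of products of `x ^ j - 1`, which identifies the two. -/

open Finset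

noncomputable section

open Polynomial

def gaussBinom : ℕ → ℕ → ℕ[X]
  | _, 0 => 1
  | 0, _ + 1 => 0
  | n + 1, m + 1 => gaussBinom n m + X ^ (m + 1) * gaussBinom n (m + 1)

lemma gaussBinom_eq_zero_of_lt : ∀ {n m : ℕ}, n < m → gaussBinom n m = 0
  | 0, _ + 1, _ => rfl
  | n + 1, m + 1, h => by
    rw [gaussBinom, gaussBinom_eq_zero_of_lt (by omega), gaussBinom_eq_zero_of_lt (by omega),
      mul_zero, add_zero]

lemma gaussBinom_self : ∀ n : ℕ, gaussBinom n n = 1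
  | 0 => rfl
  | n + 1 => by rw [gaussBinom, gaussBinom_self n, gaussBinom_eq_zero_of_lt n.lt_succ_self]; simp

section CommRing

variable {R : Type*} [CommRing R]

def prodPowSubOne (x : R) (n : ℕ) : R := ∏ j ∈ Ioc 0 n, (x ^ j - 1)

lemma prodPowSubOne_zero (x : R) : prodPowSubOne x 0 = 1 := rfl

lemma prodPowSubOne_succ (x : R) (n : ℕ) :
    prodPowSubOne x (n + 1) = prodPowSubOne x n * (x ^ (n + 1) - 1) :=
  prod_Ioc_succ_top n.zero_le _

theorem aeval_gaussBinom_mul_prodPowSubOne (x : R) :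
    ∀ a b : ℕ, aeval x (gaussBinom (a + b) a) * (prodPowSubOne x a * prodPowSubOne x b) =
      prodPowSubOne x (a + b)
  | 0, b => by simp [gaussBinom, prodPowSubOne_zero]
  | a + 1, 0 => by simp [gaussBinom_self, prodPowSubOne_zero]
  | a + 1, b + 1 => by
    have hleft := aeval_gaussBinom_mul_prodPowSubOne x a (b + 1)
    have hright := aeval_gaussBinom_mul_prodPowSubOne x (a + 1) b
    rw [show a + (b + 1) = a + b + 1 by omega] at hleft
    rw [show a + 1 + b = a + b + 1 by omega] at hright
    rw [show a + 1 + (b + 1) = a + b + 1 + 1 by omega, gaussBinom, map_add, map_mul, map_pow,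
      aeval_X]
    simp only [prodPowSubOne_succ] at hleft hright ⊢
    -- `x ^ (a + b + 2) - 1 = (x ^ (a + 1) - 1) + x ^ (a + 1) * (x ^ (b + 1) - 1)`
    linear_combination (x ^ (a + 1) - 1) * hleft + x ^ (a + 1) * (x ^ (b + 1) - 1) * hright

end CommRing

section Field

variable {K : Type*} [Field K]

lemma prodPowSubOne_ne_zero {x : K} (hx : ∀ j, 0 < j → x ^ j ≠ 1) (n : ℕ) :
    prodPowSubOne x n ≠ 0 :=
  prod_ne_zero_iff.2 fun j hj => sub_ne_zero.2 (hx j (mem_Ioc.1 hj).1)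

theorem prod_Ioc_pow_sub_one_div_eq_aeval_gaussBinom {x : K} (hx : ∀ j, 0 < j → x ^ j ≠ 1)
    (a b : ℕ) :
    ∏ i ∈ Ioc a (a + b), (x ^ i - 1) / (x ^ (i - a) - 1) = aeval x (gaussBinom (a + b) a) := by
  have hnum :
      (∏ i ∈ Ioc a (a + b), (x ^ i - 1)) * prodPowSubOne x a = prodPowSubOne x (a + b) := by
    rw [mul_comm]; exact prod_Ioc_consecutive _ a.zero_le (a.le_add_right b)
  have hden : ∏ i ∈ Ioc a (a + b), (x ^ (i - a) - 1) = prodPowSubOne x b := by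
    rw [show Ioc a (a + b) = (Ioc 0 b).map (addLeftEmbedding a) by simp, prod_map]
    simp [prodPowSubOne]
  rw [prod_div_distrib, hden, div_eq_iff (prodPowSubOne_ne_zero hx b)]
  apply mul_right_cancel₀ (prodPowSubOne_ne_zero hx a)
  rw [hnum, ← aeval_gaussBinom_mul_prodPowSubOne x a b]
  ring

end Field

lemma RatFunc.algebraMap_map_eq_aeval_X {R K : Type*} [CommSemiring R] [Field K] [Algebra R K]
    (p : R[X]) :
    algebraMap K[X] (RatFunc K) (p.map (algebraMap R K)) = aeval (RatFunc.X : RatFunc K) p := by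
  rw [← RatFunc.algebraMap_X, aeval_algebraMap_apply, ← aeval_map_algebraMap K, aeval_X_left_apply]

lemma RatFunc.X_pow_ne_one {K : Type*} [Field K] {j : ℕ} (hj : 0 < j) :
    (RatFunc.X : RatFunc K) ^ j ≠ 1 := by
  rw [← sub_ne_zero, ← RatFunc.algebraMap_X, ← map_pow, ← map_one (algebraMap K[X] _), ← map_sub]
  exact RatFunc.algebraMap_ne_zero (by simpa using X_pow_sub_C_ne_zero hj (1 : K))

lemma prod_Icc_natCast_add_one {M : Type*} [CommMonoid M] (f : ℤ → M) (a b : ℕ) :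
    ∏ j ∈ Icc ((a : ℤ) + 1) b, f j = ∏ i ∈ Ioc a b, f i := by
  have hmap : (Ioc a b).map Nat.castEmbedding = Icc ((a : ℤ) + 1) b := by
    ext j
    simp only [mem_Icc, mem_map, mem_Ioc, Nat.castEmbedding_apply]
    exact ⟨by rintro ⟨i, hi, rfl⟩; omega, fun h => ⟨j.toNat, by omega, by omega⟩⟩
  rw [← hmap, prod_map]
  rfl

theorem stmt18_general (n k : ℤ) (hk1 : 1 ≤ k) (hk : k ≤ n/2) :
    ∃ P : Polynomial ℤ, (∀ m, 0 ≤ P.coeff m) ∧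
      ((q^((n-1)*k)-1)/(q-1)) *
          ∏ j ∈ Finset.Icc (k+1) (n/2), (q^(2*j)-1)/(q^(2*j-2*k)-1)
        = algebraMap (Polynomial ℚ) F (P.map (Int.castRingHom ℚ)) := by
  obtain ⟨a, rfl⟩ := Int.eq_ofNat_of_zero_le (by omega : 0 ≤ k)
  obtain ⟨b, hb⟩ := Int.eq_ofNat_of_zero_le (by omega : 0 ≤ n / 2 - a)
  obtain ⟨T, hT⟩ := Int.eq_ofNat_of_zero_le (mul_nonneg (by omega) (by omega) : 0 ≤ (n - 1) * a)
  have hfactor : ∏ j ∈ Icc ((a : ℤ) + 1) (n / 2), (q ^ (2 * j) - 1) / (q ^ (2 * j - 2 * a) - 1) =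
      ∏ i ∈ Ioc a (a + b), ((q ^ 2) ^ i - 1) / ((q ^ 2) ^ (i - a) - 1) := by
    rw [show n / 2 = ((a + b : ℕ) : ℤ) by omega, prod_Icc_natCast_add_one]
    refine prod_congr rfl fun i hi => ?_
    rw [show 2 * (i : ℤ) - 2 * a = ((2 * (i - a) : ℕ) : ℤ) by have := (mem_Ioc.1 hi).1; omega,
      show 2 * (i : ℤ) = ((2 * i : ℕ) : ℤ) by omega, zpow_natCast, zpow_natCast, pow_mul, pow_mul]
  refine ⟨((∑ i ∈ range T, X ^ i) * (gaussBinom (a + b) a).comp (X ^ 2)).map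
    (Nat.castRingHom ℤ), fun m => by rw [coeff_map]; exact Int.natCast_nonneg _, ?_⟩
  rw [hT, zpow_natCast, hfactor, prod_Ioc_pow_sub_one_div_eq_aeval_gaussBinom, ← geom_sum_eq]
  · rw [Polynomial.map_map, Subsingleton.elim ((Int.castRingHom ℚ).comp (Nat.castRingHom ℤ))
      (algebraMap ℕ ℚ), RatFunc.algebraMap_map_eq_aeval_X]
    simp only [map_mul, map_sum, map_pow, aeval_X, aeval_comp, q]
    simp only [aeval_def]
    -- the two sides use different (but equal) `ℕ`-algebra structures on `RatFunc ℚ`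
    congr 2
    exact Subsingleton.elim _ _
  · simpa [q] using RatFunc.X_pow_ne_one (K := ℚ) one_pos
  · intro j hj
    rw [← pow_mul]
    exact RatFunc.X_pow_ne_one (by positivity)

/-- The modified stringy E-function of `Pf(2k,n)` (even `n`) is a polynomial in `q`
with nonnegative integer coefficients. -/
theorem stmt18 (n k : ℤ) (hn : Even n) (hn2 : 2 ≤ n) (hk1 : 1 ≤ k) (hk : k ≤ n/2) :
    ∃ P : Polynomial ℤ, (∀ m, 0 ≤ P.coeff m) ∧
      ((q^((n-1)*k)-1)/(q-1)) *
          ∏ j ∈ Finset.Icc (k+1) (n/2), (q^(2*j)-1)/(q^(2*j-2*k)-1)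
        = algebraMap (Polynomial ℚ) F (P.map (Int.castRingHom ℚ)) :=
  stmt18_general n k hk1 hk
end
end
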